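/- arXiv:2002.11604 — 7 statements merged into one kernel-verified Lean document; each statement's English description precedes it below -/
import Mathlib

section
/- Every finite N-free ordered set which is not a chain has an even number of greedy linear extensions. -/
variable {α : Type*}

/-- `x` is a minimal element of the subposet induced on the finite set `s`. -/
def IsMinimalIn [PartialOrder α] (s : Finset α) (x : α) : Prop :=
  x ∈ s ∧ ∀ y ∈ s, ¬ y < x

/-- A valid greedy choice of the next element, given the previously chosen element `p`
(`none` at the start) and the set `s` of not-yet-chosen elements: the next element must
be minimal among the remaining elements and, moreover, if some element strictly above `p`
is minimal among the remaining elements, then the next element must be strictly above `p`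
(i.e. it is a minimal element of `U(p)` that can extend the linear extension). -/
def GreedyNext [PartialOrder α] (p : Option α) (s : Finset α) (x : α) : Prop :=
  IsMinimalIn s x ∧
    ∀ q : α, p = some q → (∃ v ∈ s, q < v ∧ IsMinimalIn s v) → q < x

/-- The list is a valid greedy enumeration of the finite set `s`, the previously chosen
element being `p` (`none` at the start). -/
def GreedyFrom [PartialOrder α] [DecidableEq α] :
    Option α → Finset α → List α → Prop
  | _, s, [] => s = ∅
  | p, s, x :: l => GreedyNext p s x ∧ GreedyFrom (some x) (s.erase x) l

/-- `l` is a greedy linear extension of the finite poset `α`, presented as the list of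
its elements in increasing order. -/
def IsGreedyLE [PartialOrder α] [DecidableEq α] [Fintype α] (l : List α) : Prop :=
  GreedyFrom (none : Option α) Finset.univ l

/-- The poset contains an "N": `a ≺ b`, `c ≺ b`, `c ≺ d` with `a, b, c, d` pairwise
distinct and `a` incomparable to `d`.  A poset is N-free when `¬ HasN`. -/
def HasN (α : Type*) [PartialOrder α] : Prop :=
  ∃ a b c d : α, a ≠ b ∧ a ≠ c ∧ a ≠ d ∧ b ≠ c ∧ b ≠ d ∧ c ≠ d ∧
    a ⋖ b ∧ c ⋖ b ∧ c ⋖ d ∧ ¬ a ≤ d ∧ ¬ d ≤ a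

/-!
Cut a greedy linear extension of a finite ordered set `s` after its first block `B`, the
ascending run that starts at a minimal element and climbs until it must jump: `B` is a chain
closed downwards in `s`, and the rest is an arbitrary greedy linear extension of `s \ B`. So the
number of greedy linear extensions of `s` is the sum over the blocks `B` of that of `s \ B`, and
by induction a term is even unless `s \ B` is a chain, when it is `1`. Those blocks are the chain
partitions: `s = X ∪ (s \ X)` with both parts chains and `X` closed downwards. If `s` is N-free
and not a chain, every such `X` is `L ∪ P` and `s \ X` is `Q ∪ U`, where `L` lies below
everything, `P` and `Q` are incomparable and `U` lies above `P ∪ Q`; then `X ↦ L ∪ Q` is an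
involution without fixed points. The induction runs over upper sets `s` of the given ordered set,
so that covers in `s` are covers in the whole ordered set, where N-freeness is assumed.
-/

theorem Finset.even_card_of_involution {β : Type*} {s : Finset β} (g : β → β)
    (hg : ∀ a ∈ s, g a ∈ s) (hgg : ∀ a ∈ s, g (g a) = a) (hne : ∀ a ∈ s, g a ≠ a) :
    Even s.card := by
  rw [← ZMod.natCast_eq_zero_iff_even, Finset.card_eq_sum_ones, Nat.cast_sum]
  exact Finset.sum_involution (fun a _ => g a) (fun _ _ => by decide)
    (fun a ha _ => hne a ha) hg hgg

theorem List.finite_setOf_nodup [Fintype α] : {l : List α | l.Nodup}.Finite :=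
  (List.finite_length_le α (Fintype.card α)).subset fun _ hl => List.Nodup.length_le_card hl

theorem Finset.exists_isMinimalIn [PartialOrder α] {s : Finset α} (hs : s.Nonempty) :
    ∃ x, IsMinimalIn s x := by
  obtain ⟨x, hx, hmin⟩ := s.exists_minimal hs
  exact ⟨x, hx, fun y hy hyx => hyx.not_ge (hmin hy hyx.le)⟩

theorem IsMinimalIn.le_of_isChain [PartialOrder α] {s : Finset α} {x y : α}
    (hx : IsMinimalIn s x) (hs : IsChain (· ≤ ·) (s : Set α)) (hy : y ∈ s) : x ≤ y :=
  (hs.total hx.1 hy).elim id fun hyx => (eq_of_le_of_not_lt hyx (hx.2 y hy)).ge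

theorem isMinimalIn_of_pairwise_cons [PartialOrder α] {s : Finset α} {c : α} {C : List α}
    (hC : (c :: C).Pairwise (· < ·)) (hc : c ∈ s)
    (hlow : ∀ y ∈ s, ∀ z ∈ c :: C, y < z → y ∈ c :: C) : IsMinimalIn s c := by
  refine ⟨hc, fun y hy hyc => ?_⟩
  rcases List.mem_cons.1 (hlow y hy c List.mem_cons_self hyc) with rfl | hyC
  · exact hyc.false
  · exact ((List.pairwise_cons.1 hC).1 y hyC).not_gt hyc

theorem isChain_toFinset_of_pairwise [Preorder α] [DecidableEq α] {l : List α}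
    (hl : l.Pairwise (· < ·)) : IsChain (· ≤ ·) (l.toFinset : Set α) := by
  induction l with
  | nil => simp
  | cons x l ih =>
    obtain ⟨hx, hl⟩ := List.pairwise_cons.1 hl
    rw [List.toFinset_cons, Finset.coe_insert]
    exact (ih hl).insert fun b hb _ => Or.inl (hx b (by simpa using hb)).le

theorem hasN_of_covBy [PartialOrder α] {a b c d : α} (hab : a ⋖ b) (hcb : c ⋖ b) (hcd : c ⋖ d)
    (had : ¬ a ≤ d) (hda : ¬ d ≤ a) : HasN α := by
  refine ⟨a, b, c, d, hab.lt.ne, ?_, ?_, hcb.lt.ne', ?_, hcd.lt.ne, hab, hcb, hcd, had, hda⟩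
  · rintro rfl
    exact had hcd.le
  · rintro rfl
    exact had le_rfl
  · rintro rfl
    exact had hab.le

theorem Finset.exists_pairwise_lt_toFinset_eq [PartialOrder α] [DecidableEq α] (s : Finset α)
    (hs : IsChain (· ≤ ·) (s : Set α)) : ∃ l : List α, l.Pairwise (· < ·) ∧ l.toFinset = s := by
  induction s using Finset.strongInduction with
  | H s ih =>
    obtain rfl | hne := s.eq_empty_or_nonempty
    · exact ⟨[], by simp⟩
    obtain ⟨m, hm⟩ := Finset.exists_isMinimalIn hne
    obtain ⟨l, hl, hls⟩ := ih _ (Finset.erase_ssubset hm.1)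
      (hs.mono (by simp [Finset.coe_erase]))
    refine ⟨m :: l, List.pairwise_cons.2 ⟨fun y hy => ?_, hl⟩,
      by simp [hls, Finset.insert_erase hm.1]⟩
    have hy : y ∈ s.erase m := hls ▸ List.mem_toFinset.2 hy
    exact (hm.le_of_isChain hs (Finset.mem_of_mem_erase hy)).lt_of_ne
      (Finset.ne_of_mem_erase hy).symm

theorem Finset.sdiff_toFinset_cons [DecidableEq α] (s : Finset α) (x : α) (l : List α) :
    s \ (x :: l).toFinset = s.erase x \ l.toFinset := by
  rw [List.toFinset_cons, Finset.sdiff_insert, Finset.erase_sdiff_comm]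

section Greedy

variable [PartialOrder α] [DecidableEq α] {s : Finset α} {c x y z : α} {p : Option α}
  {l B C t : List α}

def MustJump (c : α) (s : Finset α) : Prop := ¬ ∃ v ∈ s, c < v ∧ IsMinimalIn s v

def GreedyRun (c : α) : Finset α → List α → Prop
  | s, [] => MustJump c s
  | s, x :: C => c < x ∧ IsMinimalIn s x ∧ GreedyRun x (s.erase x) C

def IsGreedyBlock (s : Finset α) : List α → Prop
  | [] => False
  | x :: C => IsMinimalIn s x ∧ GreedyRun x (s.erase x) C

theorem greedyFrom_none_cons :
    GreedyFrom none s (x :: l) ↔ IsMinimalIn s x ∧ GreedyFrom (some x) (s.erase x) l := by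
  simp [GreedyFrom, GreedyNext]

theorem greedyFrom_some_iff_of_mustJump (h : MustJump c s) :
    GreedyFrom (some c) s l ↔ GreedyFrom none s l := by
  unfold MustJump at h
  cases l <;> simp_all [GreedyFrom, GreedyNext]

theorem GreedyFrom.mem_iff (h : GreedyFrom p s l) : x ∈ l ↔ x ∈ s := by
  induction l generalizing p s with
  | nil => simp [show s = ∅ from h]
  | cons y l ih =>
    rw [List.mem_cons, ih h.2, Finset.mem_erase]
    by_cases hxy : x = y <;> simp [hxy, h.1.1.1]

theorem GreedyFrom.nodup (h : GreedyFrom p s l) : l.Nodup := by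
  induction l generalizing p s with
  | nil => exact List.nodup_nil
  | cons y l ih => exact List.nodup_cons.2 ⟨fun hy => by simpa using h.2.mem_iff.1 hy, ih h.2⟩

theorem GreedyRun.pairwise (h : GreedyRun c s C) : (c :: C).Pairwise (· < ·) := by
  induction C generalizing c s with
  | nil => simp
  | cons x C ih =>
    have hC := ih h.2.2
    refine List.pairwise_cons.2 ⟨fun y hy => ?_, hC⟩
    rcases List.mem_cons.1 hy with rfl | hy
    · exact h.1
    · exact h.1.trans (List.rel_of_pairwise_cons hC hy)

theorem GreedyRun.mem (h : GreedyRun c s C) (hx : x ∈ C) : x ∈ s := by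
  induction C generalizing c s with
  | nil => simp at hx
  | cons y C ih =>
    rcases List.mem_cons.1 hx with rfl | hx
    · exact h.2.1.1
    · exact Finset.mem_of_mem_erase (ih h.2.2 hx)

theorem GreedyRun.mem_of_le (h : GreedyRun c s C) (hy : y ∈ s) (hz : z ∈ C) (hyz : y ≤ z) :
    y ∈ C := by
  induction C generalizing c s with
  | nil => simp at hz
  | cons x C ih =>
    by_cases hyx : y = x
    · simp [hyx]
    rcases List.mem_cons.1 hz with rfl | hz
    · exact absurd (hyz.lt_of_ne hyx) (h.2.1.2 y hy)
    · exact List.mem_cons_of_mem _ (ih h.2.2 (Finset.mem_erase.2 ⟨hyx, hy⟩) hz)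

theorem GreedyRun.append (hC : GreedyRun c s C) (ht : GreedyFrom none (s \ C.toFinset) t) :
    GreedyFrom (some c) s (C ++ t) := by
  induction C generalizing c s with
  | nil => simpa [greedyFrom_some_iff_of_mustJump hC] using ht
  | cons x C ih =>
    rw [Finset.sdiff_toFinset_cons] at ht
    exact ⟨⟨hC.2.1, fun q hq _ => Option.some_inj.1 hq ▸ hC.1⟩, ih hC.2.2 ht⟩

theorem GreedyFrom.exists_run_append (h : GreedyFrom (some c) s l) :
    ∃ C t, GreedyRun c s C ∧ GreedyFrom none (s \ C.toFinset) t ∧ l = C ++ t := by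
  induction l generalizing c s with
  | nil =>
    have hs : s = ∅ := h
    exact ⟨[], [], by simp [GreedyRun, MustJump, hs], by simpa [GreedyFrom] using hs, rfl⟩
  | cons x l ih =>
    by_cases hj : MustJump c s
    · exact ⟨[], x :: l, hj, by simpa using (greedyFrom_some_iff_of_mustJump hj).1 h, rfl⟩
    obtain ⟨C, t, hC, ht, rfl⟩ := ih h.2
    exact ⟨x :: C, t, ⟨h.1.2 c rfl (not_not.1 hj), h.1.1, hC⟩,
      by rwa [Finset.sdiff_toFinset_cons], rfl⟩

theorem GreedyRun.eq_of_append_eq {C' t' : List α} (hC : GreedyRun c s C) (hC' : GreedyRun c s C')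
    (heq : C ++ t = C' ++ t') : C = C' := by
  induction C generalizing c s C' with
  | nil =>
    cases C' with
    | nil => rfl
    | cons y C' => exact absurd ⟨y, hC'.2.1.1, hC'.1, hC'.2.1⟩ hC
  | cons x C ih =>
    cases C' with
    | nil => exact absurd ⟨x, hC.2.1.1, hC.1, hC.2.1⟩ hC'
    | cons y C' =>
      simp only [List.cons_append, List.cons.injEq] at heq
      obtain ⟨rfl, heq⟩ := heq
      rw [ih hC.2.2 hC'.2.2 heq]


theorem IsGreedyBlock.ne_nil (hB : IsGreedyBlock s B) : B ≠ [] := by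
  rintro rfl
  exact hB

theorem IsGreedyBlock.pairwise (hB : IsGreedyBlock s B) : B.Pairwise (· < ·) := by
  cases B with
  | nil => exact hB.elim
  | cons x C => exact hB.2.pairwise

theorem IsGreedyBlock.mem (hB : IsGreedyBlock s B) (hx : x ∈ B) : x ∈ s := by
  cases B with
  | nil => exact hB.elim
  | cons y C =>
    rcases List.mem_cons.1 hx with rfl | hx
    · exact hB.1.1
    · exact Finset.mem_of_mem_erase (hB.2.mem hx)

theorem IsGreedyBlock.mem_of_le (hB : IsGreedyBlock s B) (hy : y ∈ s) (hz : z ∈ B) (hyz : y ≤ z) :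
    y ∈ B := by
  cases B with
  | nil => exact hB.elim
  | cons x C =>
    by_cases hyx : y = x
    · simp [hyx]
    rcases List.mem_cons.1 hz with rfl | hz
    · exact absurd (hyz.lt_of_ne hyx) (hB.1.2 y hy)
    · exact List.mem_cons_of_mem _ (hB.2.mem_of_le (Finset.mem_erase.2 ⟨hyx, hy⟩) hz hyz)

theorem IsGreedyBlock.sdiff_ssubset (hB : IsGreedyBlock s B) : s \ B.toFinset ⊂ s := by
  obtain ⟨x, hx⟩ := List.exists_mem_of_ne_nil _ hB.ne_nil
  exact Finset.sdiff_ssubset (fun y hy => hB.mem (List.mem_toFinset.1 hy))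
    ⟨x, List.mem_toFinset.2 hx⟩

theorem IsGreedyBlock.isUpperSet_sdiff (hB : IsGreedyBlock s B) (hs : IsUpperSet (s : Set α)) :
    IsUpperSet ((s \ B.toFinset : Finset α) : Set α) := by
  rw [Finset.coe_sdiff]
  exact hs.sdiff fun y hy z hz hyz => by simpa using hB.mem_of_le hy (by simpa using hz) hyz

theorem IsGreedyBlock.append (hB : IsGreedyBlock s B) (ht : GreedyFrom none (s \ B.toFinset) t) :
    GreedyFrom none s (B ++ t) := by
  cases B with
  | nil => exact hB.elim
  | cons x C =>
    rw [Finset.sdiff_toFinset_cons] at ht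
    exact greedyFrom_none_cons.2 ⟨hB.1, hB.2.append ht⟩

theorem GreedyFrom.exists_block_append (hs : s.Nonempty) (h : GreedyFrom none s l) :
    ∃ B t, IsGreedyBlock s B ∧ GreedyFrom none (s \ B.toFinset) t ∧ l = B ++ t := by
  cases l with
  | nil => exact absurd (show s = ∅ from h) hs.ne_empty
  | cons x l =>
    obtain ⟨hx, hl⟩ := greedyFrom_none_cons.1 h
    obtain ⟨C, t, hC, ht, rfl⟩ := hl.exists_run_append
    exact ⟨x :: C, t, ⟨hx, hC⟩, by rwa [Finset.sdiff_toFinset_cons], rfl⟩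

theorem IsGreedyBlock.eq_of_append_eq {B' t' : List α} (hB : IsGreedyBlock s B)
    (hB' : IsGreedyBlock s B') (heq : B ++ t = B' ++ t') : B = B' := by
  cases B with
  | nil => exact hB.elim
  | cons x C =>
    cases B' with
    | nil => exact hB'.elim
    | cons y C' =>
      simp only [List.cons_append, List.cons.injEq] at heq
      obtain ⟨rfl, heq⟩ := heq
      rw [hB.2.eq_of_append_eq hB'.2 heq]

theorem greedyFrom_of_pairwise (hl : l.Pairwise (· < ·)) : GreedyFrom p l.toFinset l := by
  induction l generalizing p with
  | nil => rfl
  | cons x l ih =>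
    obtain ⟨hxl, hl⟩ := List.pairwise_cons.1 hl
    have hmin : IsMinimalIn (x :: l).toFinset x := by
      refine ⟨by simp, fun y hy hyx => ?_⟩
      rcases List.mem_cons.1 (List.mem_toFinset.1 hy) with rfl | hy
      · exact hyx.false
      · exact (hxl y hy).not_gt hyx
    refine ⟨⟨hmin, fun q _ ⟨v, hv, hqv, hvmin⟩ => ?_⟩, ?_⟩
    · rcases List.mem_cons.1 (List.mem_toFinset.1 hv) with rfl | hv
      · exact hqv
      · exact absurd (hxl v hv) (hvmin.2 x hmin.1)
    · rw [List.toFinset_cons, Finset.erase_insert fun h => (hxl x (List.mem_toFinset.1 h)).false]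
      exact ih hl

theorem GreedyFrom.pairwise_of_isChain (hs : IsChain (· ≤ ·) (s : Set α)) (h : GreedyFrom p s l) :
    l.Pairwise (· < ·) := by
  induction l generalizing p s with
  | nil => exact List.Pairwise.nil
  | cons x l ih =>
    refine List.pairwise_cons.2 ⟨fun y hy => ?_, ih (hs.mono (by simp [Finset.coe_erase])) h.2⟩
    have hy : y ∈ s.erase x := h.2.mem_iff.1 hy
    exact (h.1.1.le_of_isChain hs (Finset.mem_of_mem_erase hy)).lt_of_ne
      (Finset.ne_of_mem_erase hy).symm

theorem ncard_greedyFrom_of_isChain (hs : IsChain (· ≤ ·) (s : Set α)) :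
    {l | GreedyFrom p s l}.ncard = 1 := by
  obtain ⟨L, hL, rfl⟩ := s.exists_pairwise_lt_toFinset_eq hs
  refine Set.ncard_eq_one.2 ⟨L, Set.ext fun l => ⟨fun hl => ?_, ?_⟩⟩
  · exact (hl.pairwise_of_isChain hs).eq_of_mem_iff hL fun x => by
      rw [hl.mem_iff, List.mem_toFinset]
  · rintro rfl
    exact greedyFrom_of_pairwise hL

end Greedy

section ChainPartition

variable [PartialOrder α] [DecidableEq α] {s X : Finset α} {c q y : α}

structure IsChainPartition (s X : Finset α) : Prop where
  subset : X ⊆ s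
  isChain : IsChain (· ≤ ·) (X : Set α)
  isChain_sdiff : IsChain (· ≤ ·) ((s \ X : Finset α) : Set α)
  mem_of_le : ∀ y ∈ s, ∀ x ∈ X, y ≤ x → y ∈ X

-- `X = L ∪ P ↦ L ∪ Q`
open scoped Classical in
noncomputable def chainPartner (s X : Finset α) : Finset α :=
  {x ∈ s | ∀ c ∈ X, c ≤ x → ∀ y ∈ s \ X, c < y}

theorem mem_chainPartner :
    y ∈ chainPartner s X ↔ y ∈ s ∧ ∀ c ∈ X, c ≤ y → ∀ z ∈ s \ X, c < z := by
  simp [chainPartner]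

namespace IsChainPartition

variable (hX : IsChainPartition s X)
include hX

theorem isChain_of_lt {t : Finset α} (hts : t ⊆ s)
    (h : ∀ a ∈ t, ∀ b ∈ t, a ∈ X → b ∉ X → a < b) : IsChain (· ≤ ·) (t : Set α) := by
  intro a ha b hb hab
  have has := hts ha
  have hbs := hts hb
  by_cases haX : a ∈ X <;> by_cases hbX : b ∈ X
  · exact hX.isChain haX hbX hab
  · exact Or.inl (h a ha b hb haX hbX).le
  · exact Or.inr (h b hb a ha hbX haX).le
  · exact hX.isChain_sdiff (by simp [has, haX]) (by simp [hbs, hbX]) hab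

theorem exists_not_lt (hs : ¬ IsChain (· ≤ ·) (s : Set α)) : ∃ c ∈ X, ∃ y ∈ s \ X, ¬ c < y := by
  by_contra! h
  exact hs (hX.isChain_of_lt subset_rfl fun a _ b hb haX hbX => h a haX b (by simp [hb, hbX]))

theorem mem_chainPartner_of_isMinimalIn (hq : IsMinimalIn (s \ X) q) : q ∈ chainPartner s X := by
  obtain ⟨hqs, hqX⟩ := Finset.mem_sdiff.1 hq.1
  refine mem_chainPartner.2 ⟨hqs, fun c hc hcq z hz => ?_⟩
  exact (hcq.lt_of_ne fun h => hqX (h ▸ hc)).trans_le (hq.le_of_isChain hX.isChain_sdiff hz)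

-- `e ⋖ b`, `w ⋖ b`, `w ⋖ d` would form an N for any `d ∈ X` covering `w`
theorem forall_le_of_covBy [IsStronglyAtomic α] (hN : ¬ HasN α) (hs : IsUpperSet (s : Set α))
    {b e w y₀ : α} (heD : e ∈ s \ X) (heP : e ∈ chainPartner s X) (heb : e ⋖ b) (hwX : w ∈ X)
    (hwb : w ⋖ b) (hy₀ : y₀ ∈ s \ X) (hwy₀ : ¬ w < y₀) : ∀ c ∈ X, c ≤ w := by
  intro c hc
  by_contra hcw
  obtain ⟨d, hwd, hdc⟩ :=
    exists_covBy_le_of_lt (((hX.isChain.total hwX hc).resolve_right hcw).lt_of_not_ge hcw)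
  have hdX : d ∈ X := hX.mem_of_le d (hs hwd.le (hX.subset hwX)) c hc hdc
  obtain ⟨hes, heX⟩ := Finset.mem_sdiff.1 heD
  refine hN (hasN_of_covBy heb hwb hwd (fun hed => heX (hX.mem_of_le e hes d hdX hed))
    fun hde => hwy₀ ?_)
  exact hwd.lt.trans ((mem_chainPartner.1 heP).2 d hdX hde y₀ hy₀)

theorem lt_of_not_mem_chainPartner [IsStronglyAtomic α] [IsStronglyCoatomic α] (hN : ¬ HasN α)
    (hs : IsUpperSet (s : Set α)) (hy : y ∈ s \ X) (hyP : y ∉ chainPartner s X) (hc : c ∈ X) :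
    c < y := by
  classical
  have hbad : ∀ {z}, z ∈ {z ∈ s \ X | z ∉ chainPartner s X} ↔ z ∈ s \ X ∧ z ∉ chainPartner s X :=
    Finset.mem_filter
  obtain ⟨b, hb⟩ := Finset.exists_isMinimalIn ⟨y, hbad.2 ⟨hy, hyP⟩⟩
  obtain ⟨hbD, hbP⟩ := hbad.1 hb.1
  have below_b : ∀ z ∈ s \ X, z < b → z ∈ chainPartner s X := fun z hz hzb =>
    by_contra fun h => hb.2 z (hbad.2 ⟨hz, h⟩) hzb
  obtain ⟨c₀, hc₀X, hc₀b, y₀, hy₀, hc₀y₀⟩ : ∃ c₀ ∈ X, c₀ ≤ b ∧ ∃ y₀ ∈ s \ X, ¬ c₀ < y₀ := by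
    rw [mem_chainPartner] at hbP
    push Not at hbP
    exact hbP (Finset.mem_sdiff.1 hbD).1
  obtain ⟨q, hq⟩ := Finset.exists_isMinimalIn ⟨y, hy⟩
  obtain ⟨hqs, hqX⟩ := Finset.mem_sdiff.1 hq.1
  have hqb : q < b := (hq.le_of_isChain hX.isChain_sdiff hbD).lt_of_ne
    fun h => hbP (h ▸ hX.mem_chainPartner_of_isMinimalIn hq)
  obtain ⟨e, hqe, heb⟩ := exists_le_covBy_of_lt hqb
  have heD : e ∈ s \ X :=
    Finset.mem_sdiff.2 ⟨hs hqe hqs, fun heX => hqX (hX.mem_of_le q hqs e heX hqe)⟩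
  obtain ⟨w, hc₀w, hwb⟩ :=
    exists_le_covBy_of_lt (hc₀b.lt_of_ne fun h => (Finset.mem_sdiff.1 hbD).2 (h ▸ hc₀X))
  have hwX : w ∈ X := by
    by_contra hwX
    have hwD : w ∈ s \ X := Finset.mem_sdiff.2 ⟨hs hc₀w (hX.subset hc₀X), hwX⟩
    exact hc₀y₀ ((mem_chainPartner.1 (below_b w hwD hwb.lt)).2 c₀ hc₀X hc₀w y₀ hy₀)
  have hle := hX.forall_le_of_covBy hN hs heD (below_b e heD heb.lt) heb hwX hwb hy₀
    fun hwy₀ => hc₀y₀ (hc₀w.trans_lt hwy₀)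
  have hby : b ≤ y :=
    hb.le_of_isChain (hX.isChain_sdiff.mono fun z hz => (hbad.1 hz).1) (hbad.2 ⟨hy, hyP⟩)
  exact (hle c hc).trans_lt (hwb.lt.trans_le hby)

theorem chainPartner_isChainPartition [IsStronglyAtomic α] [IsStronglyCoatomic α]
    (hN : ¬ HasN α) (hs : IsUpperSet (s : Set α)) : IsChainPartition s (chainPartner s X) where
  subset _ hx := (mem_chainPartner.1 hx).1
  isChain := hX.isChain_of_lt (fun _ hx => (mem_chainPartner.1 hx).1) fun a ha b hb haX hbX =>
    (mem_chainPartner.1 ha).2 a haX le_rfl b (Finset.mem_sdiff.2 ⟨(mem_chainPartner.1 hb).1, hbX⟩)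
  isChain_sdiff := hX.isChain_of_lt Finset.sdiff_subset fun _ _ _ hb haX hbX =>
    hX.lt_of_not_mem_chainPartner hN hs (Finset.mem_sdiff.2 ⟨(Finset.mem_sdiff.1 hb).1, hbX⟩)
      (Finset.mem_sdiff.1 hb).2 haX
  mem_of_le _ hy _ hx hyx := mem_chainPartner.2
    ⟨hy, fun c hc hcy => (mem_chainPartner.1 hx).2 c hc (hcy.trans hyx)⟩

theorem chainPartner_ne (hs : ¬ IsChain (· ≤ ·) (s : Set α)) : chainPartner s X ≠ X := by
  obtain ⟨-, -, y, hy, -⟩ := hX.exists_not_lt hs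
  obtain ⟨q, hq⟩ := Finset.exists_isMinimalIn ⟨y, hy⟩
  exact fun h => (Finset.mem_sdiff.1 hq.1).2 (h ▸ hX.mem_chainPartner_of_isMinimalIn hq)

theorem chainPartner_chainPartner (hs : ¬ IsChain (· ≤ ·) (s : Set α)) :
    chainPartner s (chainPartner s X) = X := by
  ext x
  constructor
  · intro hx
    by_contra hxX
    obtain ⟨hxs, hx⟩ := mem_chainPartner.1 hx
    have hxD : x ∈ s \ X := Finset.mem_sdiff.2 ⟨hxs, hxX⟩
    obtain ⟨p, hpX, y, hy, hpy⟩ := hX.exists_not_lt hs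
    obtain ⟨q, hq⟩ := Finset.exists_isMinimalIn ⟨x, hxD⟩
    have hpD' : p ∈ s \ chainPartner s X := Finset.mem_sdiff.2
      ⟨hX.subset hpX, fun hp => hpy ((mem_chainPartner.1 hp).2 p hpX le_rfl y hy)⟩
    have hqp := hx q (hX.mem_chainPartner_of_isMinimalIn hq)
      (hq.le_of_isChain hX.isChain_sdiff hxD) p hpD'
    exact (Finset.mem_sdiff.1 hq.1).2 (hX.mem_of_le q (Finset.mem_sdiff.1 hq.1).1 p hpX hqp.le)
  · intro hxX
    refine mem_chainPartner.2 ⟨hX.subset hxX, fun c hc hcx y hy => ?_⟩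
    have hcX := hX.mem_of_le c (mem_chainPartner.1 hc).1 x hxX hcx
    have hcD := (mem_chainPartner.1 hc).2 c hcX le_rfl
    obtain ⟨hys, hyP⟩ := Finset.mem_sdiff.1 hy
    by_cases hyX : y ∈ X
    · refine ((hX.isChain.total hcX hyX).resolve_right fun hyc => hyP ?_).lt_of_ne
        fun h => hyP (h ▸ hc)
      exact mem_chainPartner.2
        ⟨hys, fun c' hc' hc'y => (mem_chainPartner.1 hc).2 c' hc' (hc'y.trans hyc)⟩
    · exact hcD y (Finset.mem_sdiff.2 ⟨hys, hyX⟩)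

end IsChainPartition

open scoped Classical in
theorem even_card_chainPartitions [IsStronglyAtomic α] [IsStronglyCoatomic α] (hN : ¬ HasN α)
    (hs : IsUpperSet (s : Set α)) (hsc : ¬ IsChain (· ≤ ·) (s : Set α)) :
    Even {X ∈ s.powerset | IsChainPartition s X}.card := by
  have hmem : ∀ {X}, X ∈ {X ∈ s.powerset | IsChainPartition s X} ↔ IsChainPartition s X :=
    fun {X} => by simpa using fun hX => hX.subset
  refine Finset.even_card_of_involution (chainPartner s) (fun X hX => ?_) (fun X hX => ?_)
    fun X hX => ?_
  · exact hmem.2 ((hmem.1 hX).chainPartner_isChainPartition hN hs)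
  · exact (hmem.1 hX).chainPartner_chainPartner hsc
  · exact (hmem.1 hX).chainPartner_ne hsc

end ChainPartition

section Blocks

variable [PartialOrder α] [DecidableEq α] {s X : Finset α} {c : α} {B C : List α}

theorem greedyRun_erase_of_pairwise (hC : (c :: C).Pairwise (· < ·)) (hCs : ∀ z ∈ c :: C, z ∈ s)
    (hlow : ∀ y ∈ s, ∀ z ∈ c :: C, y < z → y ∈ c :: C)
    (hjump : ∀ v, IsMinimalIn (s \ (c :: C).toFinset) v → ∃ z ∈ c :: C, ¬ z < v) :
    GreedyRun c (s.erase c) C := by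
  induction C generalizing c s with
  | nil =>
    rintro ⟨v, hv, hcv, hvmin⟩
    obtain ⟨z, hz, hzv⟩ := hjump v (by simpa [Finset.sdiff_singleton_eq_erase] using hvmin)
    exact hzv (List.mem_singleton.1 hz ▸ hcv)
  | cons x C ih =>
    obtain ⟨hcx, hxC⟩ := List.pairwise_cons.1 hC
    have hCs' : ∀ z ∈ x :: C, z ∈ s.erase c := fun z hz =>
      Finset.mem_erase.2 ⟨(hcx z hz).ne', hCs z (List.mem_cons_of_mem _ hz)⟩
    have hlow' : ∀ y ∈ s.erase c, ∀ z ∈ x :: C, y < z → y ∈ x :: C := fun y hy z hz hyz =>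
      (List.mem_cons.1 (hlow y (Finset.mem_of_mem_erase hy) z (List.mem_cons_of_mem _ hz)
        hyz)).resolve_left (Finset.ne_of_mem_erase hy)
    refine ⟨hcx x List.mem_cons_self,
      isMinimalIn_of_pairwise_cons hxC (hCs' x List.mem_cons_self) hlow',
      ih hxC hCs' hlow' fun v hv => ?_⟩
    rw [← Finset.sdiff_toFinset_cons] at hv
    obtain ⟨z, hz, hzv⟩ := hjump v hv
    rcases List.mem_cons.1 hz with rfl | hz
    · exact ⟨x, List.mem_cons_self, fun hxv => hzv ((hcx x List.mem_cons_self).trans hxv)⟩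
    · exact ⟨z, hz, hzv⟩

theorem IsGreedyBlock.isChainPartition (hB : IsGreedyBlock s B)
    (h : IsChain (· ≤ ·) ((s \ B.toFinset : Finset α) : Set α)) :
    IsChainPartition s B.toFinset where
  subset _ hx := hB.mem (List.mem_toFinset.1 hx)
  isChain := isChain_toFinset_of_pairwise hB.pairwise
  isChain_sdiff := h
  mem_of_le _ hy _ hx hyx := List.mem_toFinset.2 (hB.mem_of_le hy (List.mem_toFinset.1 hx) hyx)

theorem IsChainPartition.exists_isGreedyBlock (hX : IsChainPartition s X)
    (hs : ¬ IsChain (· ≤ ·) (s : Set α)) : ∃ B, IsGreedyBlock s B ∧ B.toFinset = X := by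
  obtain ⟨L, hL, rfl⟩ := X.exists_pairwise_lt_toFinset_eq hX.isChain
  obtain ⟨p, hpX, y, hy, hpy⟩ := hX.exists_not_lt hs
  cases L with
  | nil => simp at hpX
  | cons x C =>
    have hCs : ∀ z ∈ x :: C, z ∈ s := fun z hz => hX.subset (List.mem_toFinset.2 hz)
    have hlow : ∀ y ∈ s, ∀ z ∈ x :: C, y < z → y ∈ x :: C := fun y hy z hz hyz =>
      List.mem_toFinset.1 (hX.mem_of_le y hy z (List.mem_toFinset.2 hz) hyz.le)
    -- the run stops at the top of `X`, else `X` would lie below all of `s \ X`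
    refine ⟨x :: C, ⟨isMinimalIn_of_pairwise_cons hL (hCs x List.mem_cons_self) hlow,
      greedyRun_erase_of_pairwise hL hCs hlow fun v hv => ?_⟩, rfl⟩
    exact ⟨p, List.mem_toFinset.1 hpX, fun hpv => hpy (hpv.trans_le
      (hv.le_of_isChain hX.isChain_sdiff hy))⟩

end Blocks

section Counting

variable [PartialOrder α] [DecidableEq α] [Fintype α]

theorem finite_setOf_greedyFrom (p : Option α) (s : Finset α) : {l | GreedyFrom p s l}.Finite :=
  List.finite_setOf_nodup.subset fun _ hl => GreedyFrom.nodup hl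

theorem finite_setOf_isGreedyBlock (s : Finset α) : {B | IsGreedyBlock s B}.Finite :=
  List.finite_setOf_nodup.subset fun _ hB => IsGreedyBlock.pairwise hB |>.nodup

theorem ncard_greedyFrom_eq_sum {s : Finset α} (hs : s.Nonempty) :
    {l | GreedyFrom none s l}.ncard = ∑ B ∈ (finite_setOf_isGreedyBlock s).toFinset,
      {t | GreedyFrom none (s \ B.toFinset) t}.ncard := by
  rw [Set.ncard_eq_toFinset_card _ (finite_setOf_greedyFrom none s)]
  simp_rw [Set.ncard_eq_toFinset_card _ (finite_setOf_greedyFrom none _)]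
  rw [← Finset.card_sigma]
  symm
  refine Finset.card_bij (fun x _ => x.1 ++ x.2) (fun x hx => ?_) (fun x hx y hy hxy => ?_)
    fun l hl => ?_
  · simp only [Finset.mem_sigma, Set.Finite.mem_toFinset, Set.mem_ofPred_eq] at hx ⊢
    exact hx.1.append hx.2
  · simp only [Finset.mem_sigma, Set.Finite.mem_toFinset, Set.mem_ofPred_eq] at hx hy
    obtain ⟨B, t⟩ := x
    obtain ⟨B', t'⟩ := y
    obtain rfl := hx.1.eq_of_append_eq hy.1 hxy
    obtain rfl := List.append_cancel_left hxy
    rfl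
  · rw [Set.Finite.mem_toFinset] at hl
    obtain ⟨B, t, hB, ht, rfl⟩ := GreedyFrom.exists_block_append hs hl
    exact ⟨⟨B, t⟩, by simpa using ⟨hB, ht⟩, rfl⟩

open scoped Classical in
theorem card_isGreedyBlock_isChain_sdiff {s : Finset α} (hsc : ¬ IsChain (· ≤ ·) (s : Set α)) :
    {B ∈ (finite_setOf_isGreedyBlock s).toFinset |
      IsChain (· ≤ ·) ((s \ B.toFinset : Finset α) : Set α)}.card =
      {X ∈ s.powerset | IsChainPartition s X}.card := by
  refine Finset.card_bij (fun B _ => B.toFinset) (fun B hB => ?_) (fun B hB B' hB' h => ?_)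
    fun X hX => ?_
  · simp only [Finset.mem_filter, Set.Finite.mem_toFinset, Set.mem_ofPred_eq] at hB
    exact Finset.mem_filter.2 ⟨Finset.mem_powerset.2 (hB.1.isChainPartition hB.2).subset,
      hB.1.isChainPartition hB.2⟩
  · simp only [Finset.mem_filter, Set.Finite.mem_toFinset, Set.mem_ofPred_eq] at hB hB'
    exact hB.1.pairwise.eq_of_mem_iff hB'.1.pairwise fun x => by
      rw [← List.mem_toFinset, h, List.mem_toFinset]
  · obtain ⟨B, hB, rfl⟩ := (Finset.mem_filter.1 hX).2.exists_isGreedyBlock hsc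
    exact ⟨B, Finset.mem_filter.2 ⟨(Set.Finite.mem_toFinset _).2 hB,
      (Finset.mem_filter.1 hX).2.isChain_sdiff⟩, rfl⟩

open scoped Classical in
theorem even_ncard_greedyFrom (hN : ¬ HasN α) (s : Finset α) (hs : IsUpperSet (s : Set α))
    (hsc : ¬ IsChain (· ≤ ·) (s : Set α)) : Even {l | GreedyFrom none s l}.ncard := by
  induction s using Finset.strongInduction with
  | H s ih =>
    have hne : s.Nonempty := Finset.nonempty_iff_ne_empty.2 fun h => hsc (by simp [h])
    have hodd : ∀ B ∈ (finite_setOf_isGreedyBlock s).toFinset,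
        Odd {t | GreedyFrom none (s \ B.toFinset) t}.ncard ↔
          IsChain (· ≤ ·) ((s \ B.toFinset : Finset α) : Set α) := by
      intro B hB
      rw [Set.Finite.mem_toFinset] at hB
      refine ⟨fun h => by_contra fun hc => Nat.not_even_iff_odd.2 h ?_, fun h => ?_⟩
      · exact ih _ hB.sdiff_ssubset (hB.isUpperSet_sdiff hs) hc
      · rw [ncard_greedyFrom_of_isChain h]
        exact odd_one
    rw [ncard_greedyFrom_eq_sum hne, Finset.even_sum_iff_even_card_odd, Finset.filter_congr hodd,
      card_isGreedyBlock_isChain_sdiff hsc]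
    exact even_card_chainPartitions hN hs hsc

end Counting

/-- Every finite N-free ordered set which is not a chain has an even number of greedy
linear extensions. -/
theorem nfree_even_number_of_greedy_linear_extensions [Fintype α] [DecidableEq α]
    [PartialOrder α] (hNfree : ¬ HasN α) (hnotchain : ∃ x y : α, ¬ x ≤ y ∧ ¬ y ≤ x) :
    Even {l : List α | IsGreedyLE l}.ncard := by
  obtain ⟨x, y, hxy, hyx⟩ := hnotchain
  refine even_ncard_greedyFrom hNfree Finset.univ (by simpa using isUpperSet_univ) fun h => ?_
  rcases h.total (Finset.mem_univ x) (Finset.mem_univ y) with h | h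
  exacts [hxy h, hyx h]
end

section
/- Let P be a finite N-free ordered set and let x, y be elements of P. If x and y have a common upper cover, then x and y have exactly the same set of upper covers. -/
variable {α : Type*}

lemma nfree_step [Fintype α] [PartialOrder α] (hNfree : ¬ HasN α)
    (x y z w : α) (hxy : x ≠ y) (hxz : x ⋖ z) (hyz : y ⋖ z) (hxw : x ⋖ w) : y ⋖ w := by
  -- x and y are incomparable
  have hnxy : ¬ x ≤ y := fun h => hxz.2 (lt_of_le_of_ne h hxy) hyz.1
  have hnyx : ¬ y ≤ x := fun h => hyz.2 (lt_of_le_of_ne h (Ne.symm hxy)) hxz.1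
  by_cases hwz : w = z
  · exact hwz ▸ hyz
  -- first: y < w, via N (y, z, x, w)
  have hyw : y < w := by
    have hyw' : y ≤ w := by
      by_contra hylw
      have hnwy : ¬ w ≤ y := fun hwy => hnxy (le_of_lt (lt_of_lt_of_le hxw.1 hwy))
      have hyneqw : y ≠ w := fun h => hnxy (h ▸ hxw.1).le
      exact hNfree ⟨y, z, x, w, hyz.ne, Ne.symm hxy, hyneqw, Ne.symm hxz.ne,
        fun h => hwz h.symm, hxw.ne, hyz, hxz, hxw, hylw, hnwy⟩
    refine lt_of_le_of_ne hyw' fun h => hnxy (h ▸ hxw.1).le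
  -- now y ⋖ w, via N (u, w, x, z) for y ≤ u ⋖ w
  obtain ⟨u, hyu, huw⟩ := exists_le_covBy_of_lt hyw
  rcases eq_or_lt_of_le hyu with rfl | hyu'
  · exact huw
  exfalso
  -- u incomparable to z
  have hnuz : ¬ u ≤ z := by
    intro h
    rcases eq_or_lt_of_le h with rfl | h'
    · exact hxw.2 hxz.1 huw.1
    · exact hyz.2 hyu' h'
  have hnzu : ¬ z ≤ u := fun h => hxw.2 hxz.1 (lt_of_le_of_lt h huw.1)
  have huneqx : u ≠ x := fun h => hnyx (h ▸ hyu'.le)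
  exact hNfree ⟨u, w, x, z, huw.ne, huneqx, fun h => hnuz h.le, Ne.symm hxw.ne,
    hwz, hxz.ne, huw, hxw, hxz, hnuz, hnzu⟩

/-- In a finite N-free ordered set, if `x` and `y` have a common upper cover, then `x`
and `y` have exactly the same set of upper covers. -/
theorem nfree_common_upper_cover [Fintype α] [PartialOrder α] (hNfree : ¬ HasN α)
    (x y z : α) (hxz : x ⋖ z) (hyz : y ⋖ z) :
    {w : α | x ⋖ w} = {w : α | y ⋖ w} := by
  rcases eq_or_ne x y with rfl | hxy
  · rfl
  ext w
  exact ⟨fun h => nfree_step hNfree x y z w hxy hxz hyz h,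
    fun h => nfree_step hNfree y x z w (Ne.symm hxy) hyz hxz h⟩
end

section
/- Let P be a finite N-free ordered set and let x, y be elements of P. If x and y have a common lower cover, then x and y have exactly the same set of lower covers. -/
variable {α : Type*}

/-- Key step: in an N-free finite poset, if `z ⋖ x`, `z ⋖ y` and `w ⋖ x`,
then `w ⋖ y`. -/
lemma nfree_aux [Fintype α] [PartialOrder α] (hNfree : ¬ HasN α)
    (x y z w : α) (hzx : z ⋖ x) (hzy : z ⋖ y) (hwx : w ⋖ x) : w ⋖ y := by
  by_cases hxy : x = y
  · exact hxy ▸ hwx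
  by_cases hwz : w = z
  · exact hwz ▸ hzy
  -- First: show w ≤ y via the N (w, x, z, y)
  have hwy : w < y := by
    have hwney : w ≠ y := by
      rintro rfl
      exact hzx.2 hzy.1 hwx.1
    rcases Classical.em (w ≤ y) with h | h
    · exact lt_of_le_of_ne h hwney
    rcases Classical.em (y ≤ w) with h' | h'
    · exact absurd (lt_of_le_of_lt h' hwx.1) (hzx.2 hzy.1)
    exact absurd ⟨w, x, z, y, hwx.1.ne, hwz, hwney, hzx.1.ne', hxy, hzy.1.ne,
      hwx, hzx, hzy, h, h'⟩ hNfree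
  -- Get a cover u of w with u ≤ y
  obtain ⟨u, hwu, huy⟩ := exists_covBy_le_of_lt hwy
  rcases eq_or_ne u y with rfl | huney
  · exact hwu
  -- Now derive a contradiction via the N (z, x, w, u)
  exfalso
  have huley : u < y := lt_of_le_of_ne huy huney
  have hzu : ¬ z ≤ u := by
    intro h
    rcases eq_or_ne z u with rfl | hne
    · exact hwx.2 hwu.1 hzx.1
    · exact hzy.2 (lt_of_le_of_ne h hne) huley
  have huz : ¬ u ≤ z := by
    intro h
    exact hwx.2 (hwu.1.trans_le h) hzx.1
  have hxu : x ≠ u := by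
    rintro rfl
    exact hzy.2 hzx.1 huley
  exact hNfree ⟨z, x, w, u, hzx.1.ne, Ne.symm hwz, fun h => hzu h.le,
    hwx.1.ne.symm, hxu, hwu.1.ne, hzx, hwx, hwu, hzu, huz⟩

/-- In a finite N-free ordered set, if `x` and `y` have a common lower cover, then `x`
and `y` have exactly the same set of lower covers. -/
theorem nfree_common_lower_cover [Fintype α] [PartialOrder α] (hNfree : ¬ HasN α)
    (x y z : α) (hzx : z ⋖ x) (hzy : z ⋖ y) :
    {w : α | w ⋖ x} = {w : α | w ⋖ y} := by
  ext w
  exact ⟨fun h => nfree_aux hNfree x y z w hzx hzy h,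
    fun h => nfree_aux hNfree y x z w hzy hzx h⟩
end

section
/- Let P be a finite N-free ordered set which is not totally ordered, and suppose that every minimal element x of P is either maximal in P or has an upper cover which is not a minimal element of P ∖ {x}. Then P has two distinct minimal elements m and m′ such that {m, m′} is an autonomous subset of P. -/
variable {α : Type*}

/-- `A` is an autonomous subset of the poset. -/
def IsAutonomous [PartialOrder α] (A : Set α) : Prop :=
  ∀ v ∉ A, ∀ a ∈ A, ∀ a' ∈ A, (v < a → v < a') ∧ (a < v → a' < v)

/-- In a finite poset there is a minimal element below any element. -/
lemma exists_isMin_le' [Fintype α] [PartialOrder α] (a : α) : ∃ m, IsMin m ∧ m ≤ a := by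
  obtain ⟨m, hm, hmin⟩ := wellFounded_lt.has_min {x : α | x ≤ a} ⟨a, le_refl a⟩
  refine ⟨m, fun b hb => ?_, hm⟩
  rcases hb.lt_or_eq with h | h
  · exact absurd h (hmin b (h.le.trans hm))
  · exact h.ge

/-- If two distinct minimal elements share a common upper cover, everything strictly
above one is strictly above the other. -/
lemma up_transfer [Fintype α] [PartialOrder α] (hNfree : ¬ HasN α) {m u y v : α}
    (hu : IsMin u) (hmu : m ≠ u) (h1 : m ⋖ y) (h2 : u ⋖ y) (hv : m < v) : u < v := by
  obtain ⟨d, hd, hdv⟩ := exists_covBy_le_of_lt hv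
  by_cases hdy : d = y
  · exact lt_of_lt_of_le h2.lt (hdy ▸ hdv)
  · have hud : u ≠ d := by
      rintro rfl
      exact hu.not_lt hd.lt
    have : u ≤ d ∨ d ≤ u := by
      by_contra h
      push_neg at h
      exact hNfree ⟨u, y, m, d, h2.ne, hmu.symm, hud, h1.ne', Ne.symm hdy, hd.ne,
        h2, h1, hd, h.1, h.2⟩
    rcases this with h | h
    · rcases h.lt_or_eq with h' | h'
      · exact h'.trans_le hdv
      · exact absurd (h' ▸ hd.lt) hu.not_lt
    · exact absurd (hd.lt.trans_le h) hu.not_lt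

/-- Let `P` be a finite N-free ordered set which is not totally ordered, and suppose that
every minimal element `x` is either maximal or has an upper cover which is not minimal in
`P ∖ {x}`.  Then `P` has two distinct minimal elements `m`, `m'` such that `{m, m'}` is
autonomous in `P`. -/
theorem nfree_autonomous_pair_of_minimals [Fintype α] [PartialOrder α]
    (hNfree : ¬ HasN α) (hnotchain : ∃ x y : α, ¬ x ≤ y ∧ ¬ y ≤ x)
    (hhyp : ∀ x : α, IsMin x → IsMax x ∨ ∃ y, x ⋖ y ∧ ∃ u, u ≠ x ∧ u < y) :
    ∃ m m' : α, m ≠ m' ∧ IsMin m ∧ IsMin m' ∧ IsAutonomous {m, m'} := by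
  classical
  by_cases hall : ∀ x : α, IsMin x → IsMax x
  · -- antichain case: every element is minimal
    have hmin : ∀ a : α, IsMin a := by
      intro a
      obtain ⟨m, hm, hma⟩ := exists_isMin_le' a
      have : a = m := le_antisymm (hall m hm hma) hma
      exact this ▸ hm
    obtain ⟨x, y, hxy, hyx⟩ := hnotchain
    refine ⟨x, y, fun h => hxy (h ▸ le_refl x), hmin x, hmin y, ?_⟩
    intro v _ a _ a' _
    exact ⟨fun h => absurd h (hmin a).not_lt, fun h => absurd h (hmin v).not_lt⟩
  · push_neg at hall
    obtain ⟨m₀, hm₀, hm₀max⟩ := hall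
    set Y : Set α := {y | ∃ m, IsMin m ∧ m ⋖ y ∧ ∃ u, IsMin u ∧ u ≠ m ∧ u < y} with hY
    have hYne : Y.Nonempty := by
      rcases hhyp m₀ hm₀ with h | ⟨y, hcov, u, hune, huy⟩
      · exact absurd h hm₀max
      · obtain ⟨u', hu', hu'u⟩ := exists_isMin_le' u
        refine ⟨y, m₀, hm₀, hcov, u', hu', ?_, hu'u.trans_lt huy⟩
        rintro rfl
        exact hcov.2 (hu'u.lt_of_ne hune.symm) huy
    obtain ⟨y, hyY, hymin⟩ := wellFounded_lt.has_min Y hYne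
    obtain ⟨m, hm, hcy, u, hu, hum, huy⟩ := hyY
    by_cases hcov2 : u ⋖ y
    · -- common cover: {m, u} is autonomous
      refine ⟨m, u, Ne.symm hum, hm, hu, ?_⟩
      intro v hv a ha a' ha'
      simp only [Set.mem_insert_iff, Set.mem_singleton_iff] at ha ha'
      rcases ha with rfl | rfl <;> rcases ha' with rfl | rfl
      · exact ⟨fun h => absurd h hm.not_lt, fun h => h⟩
      · exact ⟨fun h => absurd h hm.not_lt,
          fun h => up_transfer hNfree hu (Ne.symm hum) hcy hcov2 h⟩
      · exact ⟨fun h => absurd h hu.not_lt,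
          fun h => up_transfer hNfree hm hum hcov2 hcy h⟩
      · exact ⟨fun h => absurd h hu.not_lt, fun h => h⟩
    · -- impossible case: derive a contradiction
      exfalso
      obtain ⟨v, hvcov, hvy⟩ := exists_covBy_le_of_lt huy
      have hvly : v < y := hvy.lt_of_ne (fun h => hcov2 (h ▸ hvcov))
      have huniq : ∀ w, IsMin w → w < v → w = u := by
        intro w hw hwv
        by_contra hwu
        exact hymin v ⟨u, hu, hvcov, w, hw, hwu, hwv⟩ hvly
      rcases hhyp u hu with h | ⟨y₂, hcov₂, u₂, hu₂ne, hu₂y₂⟩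
      · exact h.not_lt hvcov.lt
      · obtain ⟨u₂', hu₂', hle⟩ := exists_isMin_le' u₂
        have hu₂'u : u₂' ≠ u := by
          rintro rfl
          exact hcov₂.2 (hle.lt_of_ne (Ne.symm hu₂ne)) hu₂y₂
        have hu₂'y₂ : u₂' < y₂ := hle.trans_lt hu₂y₂
        have hy₂v : y₂ ≠ v := by
          rintro rfl
          exact hu₂'u (huniq u₂' hu₂' hu₂'y₂)
        obtain ⟨a, hu₂'a, hacov⟩ := exists_le_covBy_of_lt hu₂'y₂
        have hau : a ≠ u := by
          rintro rfl
          exact hu₂'u (le_antisymm hu₂'a (hu hu₂'a))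
        have hav : a ≠ v := by
          intro heq
          have h1 : u₂' ≤ v := heq ▸ hu₂'a
          have h2 : u₂' ≠ v := by rintro rfl; exact hu₂'.not_lt hvcov.lt
          exact hu₂'u (huniq u₂' hu₂' (h1.lt_of_ne h2))
        have : a ≤ v ∨ v ≤ a := by
          by_contra h
          push_neg at h
          exact hNfree ⟨a, y₂, u, v, hacov.ne, hau, hav, hcov₂.ne', hy₂v, hvcov.ne,
            hacov, hcov₂, hvcov, h.1, h.2⟩
        rcases this with h | h
        · exact hu₂'u (huniq u₂' hu₂' (hu₂'a.trans_lt (h.lt_of_ne hav)))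
        · exact hcov₂.2 hvcov.lt (lt_of_le_of_lt h hacov.lt)
end

section
/- Let P be a finite ordered set (not necessarily N-free) with a minimal element a such that a is not maximal in P and every upper cover of a in P is a minimal element of P ∖ {a}. Let x and y be two incomparable elements of P ∖ {a}. Then the number of greedy linear extensions of P that put x before y equals the number of greedy linear extensions of P ∖ {a} that put x before y. -/
variable {α : Type*}

/-!
Deleting `a` is a bijection from the greedy linear extensions of `P` onto those of `P ∖ {a}`;
its inverse puts `a` back immediately before the first element above `a`. Two facts make
this work. An element that is minimal once `a` is removed, but lies above `a`, is an upper
cover of `a`, and by hypothesis nothing but `a` lies below it; so removing `a` changes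
neither the minimal elements nor which of them lie above the previously chosen element.
And once `a` is chosen, an upper cover of `a` (one exists as `a` is not maximal) is
available, so the greedy rule forces `a` to be immediately followed by an element above it.
-/

open Finset

namespace List

variable {β γ : Type*} [BEq β] [LawfulBEq β] [BEq γ] [LawfulBEq γ]

theorem idxOf_map_of_injective {f : β → γ} (hf : f.Injective) (l : List β) (b : β) :
    (l.map f).idxOf (f b) = l.idxOf b := by
  induction l with
  | nil => rfl
  | cons w l ih =>
    rcases eq_or_ne w b with rfl | h
    · simp
    · simp [h, hf.ne h, ih]

theorem idxOf_erase_lt_idxOf_erase_iff {a x y : β} (hx : x ≠ a) (hy : y ≠ a) (l : List β) :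
    (l.erase a).idxOf x < (l.erase a).idxOf y ↔ l.idxOf x < l.idxOf y := by
  induction l with
  | nil => rfl
  | cons z l ih =>
    rcases eq_or_ne z a with rfl | hz
    · simp [hx.symm, hy.symm]
    rw [erase_cons_tail (by simpa using hz)]
    rcases eq_or_ne z x with rfl | hxz <;> rcases eq_or_ne z y with rfl | hyz <;> simp [*]

end List

section Greedy

variable [PartialOrder α] {a : α}

open Classical in
noncomputable def insertBeforeFirstAbove (a : α) : List α → List α
  | [] => [a]
  | w :: l => if a < w then a :: w :: l else w :: insertBeforeFirstAbove a l

theorem insertBeforeFirstAbove_cons_of_lt {w : α} (haw : a < w) (l : List α) :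
    insertBeforeFirstAbove a (w :: l) = a :: w :: l := by
  simp [insertBeforeFirstAbove, haw]

theorem insertBeforeFirstAbove_cons_of_not_lt {w : α} (haw : ¬ a < w) (l : List α) :
    insertBeforeFirstAbove a (w :: l) = w :: insertBeforeFirstAbove a l := by
  simp [insertBeforeFirstAbove, haw]

variable [DecidableEq α]

theorem IsMinimalIn.erase {s : Finset α} {v b : α} (hv : IsMinimalIn s v) (hvb : v ≠ b) :
    IsMinimalIn (s.erase b) v :=
  ⟨mem_erase.2 ⟨hvb, hv.1⟩, fun u hu => hv.2 u (mem_of_mem_erase hu)⟩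

theorem IsMinimalIn.of_erase {s : Finset α} {v b : α} (hv : IsMinimalIn (s.erase b) v)
    (hbv : ¬ b < v) : IsMinimalIn s v := by
  refine ⟨mem_of_mem_erase hv.1, fun u hu huv => ?_⟩
  rcases eq_or_ne u b with rfl | hub
  · exact hbv huv
  · exact hv.2 u (mem_erase.2 ⟨hub, hu⟩) huv

theorem GreedyFrom.subset {p : Option α} {s : Finset α} {l : List α} (hg : GreedyFrom p s l) :
    ∀ z ∈ l, z ∈ s := by
  induction l generalizing p s with
  | nil => simp
  | cons w l ih =>
    rintro z (_ | ⟨_, hz⟩)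
    · exact hg.1.1.1
    · exact mem_of_mem_erase (ih hg.2 z hz)

theorem GreedyFrom.nodup_s12 {p : Option α} {s : Finset α} {l : List α} (hg : GreedyFrom p s l) :
    l.Nodup := by
  induction l generalizing p s with
  | nil => exact List.nodup_nil
  | cons w l ih =>
    exact List.nodup_cons.2 ⟨fun hw => (mem_erase.1 (hg.2.subset w hw)).1 rfl, ih hg.2⟩

variable {s : Finset α}

theorem Ici_subset_coe_erase (hs : Set.Ici a ⊆ s) {w : α} (hwa : w ≠ a) (haw : ¬ a < w) :
    Set.Ici a ⊆ ↑(s.erase w) := by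
  rw [coe_erase]
  exact Set.subset_sdiff_singleton hs fun h => haw (lt_of_le_of_ne h hwa.symm)

theorem covBy_of_isMinimalIn_erase (hs : Set.Ici a ⊆ s) {w : α}
    (hw : IsMinimalIn (s.erase a) w) (haw : a < w) : a ⋖ w :=
  ⟨haw, fun c hac hcw => hw.2 c (mem_erase.2 ⟨hac.ne', hs hac.le⟩) hcw⟩

theorem exists_isMinimalIn_erase_iff (hmin : IsMin a)
    (hcov : ∀ b : α, a ⋖ b → ∀ u : α, u ≠ a → ¬ u < b) (hs : Set.Ici a ⊆ s) {q : α}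
    (hq : q ≠ a) :
    (∃ v ∈ s.erase a, q < v ∧ IsMinimalIn (s.erase a) v) ↔
      ∃ v ∈ s, q < v ∧ IsMinimalIn s v := by
  constructor
  · rintro ⟨v, hv, hqv, hvmin⟩
    have hav : ¬ a < v := fun hav => hcov v (covBy_of_isMinimalIn_erase hs hvmin hav) q hq hqv
    exact ⟨v, mem_of_mem_erase hv, hqv, hvmin.of_erase hav⟩
  · rintro ⟨v, hv, hqv, hvmin⟩
    have hva : v ≠ a := fun h => hmin.not_lt (h ▸ hqv)
    exact ⟨v, mem_erase.2 ⟨hva, hv⟩, hqv, hvmin.erase hva⟩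

theorem GreedyFrom.erase_isMin (hmin : IsMin a)
    (hcov : ∀ b : α, a ⋖ b → ∀ u : α, u ≠ a → ¬ u < b) {p : Option α} {l : List α}
    (hg : GreedyFrom p s l) (hs : Set.Ici a ⊆ s) (hp : p ≠ some a) :
    GreedyFrom p (s.erase a) (l.erase a) := by
  induction l generalizing p s with
  | nil => exact absurd (hs le_rfl) (by simp [show s = ∅ from hg])
  | cons w l ih =>
    obtain ⟨⟨hw, hnext⟩, hl⟩ := hg
    have hpa : ∀ q, p = some q → q ≠ a := by rintro q rfl rfl; exact hp rfl
    rcases eq_or_ne w a with rfl | hwa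
    · rw [List.erase_cons_head]
      cases l with
      | nil => exact hl
      | cons u l =>
        -- the greedy rule was vacuous when `w` was chosen, since a minimal `w` lies above nothing
        refine ⟨⟨hl.1.1, fun q hq hex => ?_⟩, hl.2⟩
        have hqw := hnext q hq ((exists_isMinimalIn_erase_iff hmin hcov hs (hpa q hq)).1 hex)
        exact (hmin.not_lt hqw).elim
    · have haw : ¬ a < w := hw.2 a (hs le_rfl)
      rw [List.erase_cons_tail (by simpa using hwa)]
      refine ⟨⟨hw.erase hwa, fun q hq hex =>
        hnext q hq ((exists_isMinimalIn_erase_iff hmin hcov hs (hpa q hq)).1 hex)⟩, ?_⟩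
      rw [erase_right_comm]
      exact ih hl (Ici_subset_coe_erase hs hwa haw) (by simpa using hwa)

theorem erase_insertBeforeFirstAbove {l : List α} (hl : a ∉ l) :
    (insertBeforeFirstAbove a l).erase a = l := by
  induction l with
  | nil => simp [insertBeforeFirstAbove]
  | cons w l ih =>
    obtain ⟨hwa, hl⟩ : w ≠ a ∧ a ∉ l := by simpa [eq_comm] using hl
    by_cases haw : a < w
    · simp [insertBeforeFirstAbove_cons_of_lt haw]
    · rw [insertBeforeFirstAbove_cons_of_not_lt haw, List.erase_cons_tail (by simpa using hwa),
        ih hl]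

theorem GreedyFrom.insert_isMin (hmin : IsMin a)
    (hcov : ∀ b : α, a ⋖ b → ∀ u : α, u ≠ a → ¬ u < b) {p : Option α} {l : List α}
    (hg : GreedyFrom p (s.erase a) l) (hs : Set.Ici a ⊆ s) (hp : p ≠ some a) :
    GreedyFrom p s (insertBeforeFirstAbove a l) := by
  induction l generalizing p s with
  | nil =>
    refine ⟨⟨⟨hs le_rfl, fun u _ => hmin.not_lt⟩, fun q _ hex => ?_⟩, hg⟩
    obtain ⟨v, hv, hqv, -⟩ := hex
    have hva : v ∈ s.erase a := mem_erase.2 ⟨fun h => hmin.not_lt (h ▸ hqv), hv⟩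
    simp [show s.erase a = ∅ from hg] at hva
  | cons w l ih =>
    obtain ⟨⟨hw, hnext⟩, hl⟩ := hg
    have hpa : ∀ q, p = some q → q ≠ a := by rintro q rfl rfl; exact hp rfl
    have hwa : w ≠ a := (mem_erase.1 hw.1).1
    by_cases haw : a < w
    · rw [insertBeforeFirstAbove_cons_of_lt haw]
      refine ⟨⟨⟨hs le_rfl, fun u _ => hmin.not_lt⟩, fun q hq hex => ?_⟩,
        ⟨hw, fun _ hq _ => Option.some_inj.1 hq ▸ haw⟩, hl⟩
      -- a minimal element above `q` would put `q` below the cover `w` of `a`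
      have hqw := hnext q hq ((exists_isMinimalIn_erase_iff hmin hcov hs (hpa q hq)).2 hex)
      exact (hcov w (covBy_of_isMinimalIn_erase hs hw haw) q (hpa q hq) hqw).elim
    · rw [insertBeforeFirstAbove_cons_of_not_lt haw]
      refine ⟨⟨hw.of_erase haw, fun q hq hex =>
        hnext q hq ((exists_isMinimalIn_erase_iff hmin hcov hs (hpa q hq)).2 hex)⟩, ?_⟩
      rw [erase_right_comm] at hl
      exact ih hl (Ici_subset_coe_erase hs hwa haw) (by simpa using hwa)

theorem GreedyFrom.insertBeforeFirstAbove_erase [IsStronglyAtomic α] (hmax : ¬ IsMax a)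
    (hcov : ∀ b : α, a ⋖ b → ∀ u : α, u ≠ a → ¬ u < b) {p : Option α} {l : List α}
    (hg : GreedyFrom p s l) (hs : Set.Ici a ⊆ s) :
    insertBeforeFirstAbove a (l.erase a) = l := by
  induction l generalizing p s with
  | nil => exact absurd (hs le_rfl) (by simp [show s = ∅ from hg])
  | cons w l ih =>
    obtain ⟨⟨hw, -⟩, hl⟩ := hg
    rcases eq_or_ne w a with rfl | hwa
    · rw [List.erase_cons_head]
      cases l with
      | nil => rfl
      | cons u l =>
        -- a cover `b` of `w` is available after `w`, so the greedy rule puts `u` above `w`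
        obtain ⟨c, hwc⟩ := not_isMax_iff.1 hmax
        obtain ⟨b, hwb, -⟩ := exists_covBy_le_of_lt hwc
        have hb : IsMinimalIn (s.erase w) b :=
          ⟨mem_erase.2 ⟨hwb.lt.ne', hs hwb.le⟩, fun v hv => hcov b hwb v (mem_erase.1 hv).1⟩
        exact insertBeforeFirstAbove_cons_of_lt (hl.1.2 w rfl ⟨b, hb.1, hwb.lt, hb⟩) l
    · have haw : ¬ a < w := hw.2 a (hs le_rfl)
      rw [List.erase_cons_tail (by simpa using hwa), insertBeforeFirstAbove_cons_of_not_lt haw,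
        ih hl (Ici_subset_coe_erase hs hwa haw)]

end Greedy

section OrderEmbedding

variable {β : Type*} [PartialOrder α] [PartialOrder β] (f : β ↪o α)

theorem isMinimalIn_map_iff (s : Finset β) (v : β) :
    IsMinimalIn (s.map f.toEmbedding) (f v) ↔ IsMinimalIn s v := by
  simp [IsMinimalIn]

theorem greedyNext_map_iff (p : Option β) (s : Finset β) (x : β) :
    GreedyNext (p.map f) (s.map f.toEmbedding) (f x) ↔ GreedyNext p s x := by
  simp [GreedyNext, isMinimalIn_map_iff]

variable [DecidableEq α] [DecidableEq β]

theorem greedyFrom_map_iff (p : Option β) (s : Finset β) (l : List β) :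
    GreedyFrom (p.map f) (s.map f.toEmbedding) (l.map f) ↔ GreedyFrom p s l := by
  induction l generalizing p s with
  | nil => simp [GreedyFrom]
  | cons w l ih =>
    rw [List.map_cons, GreedyFrom, GreedyFrom, greedyNext_map_iff, ← ih, map_erase]
    rfl

theorem isGreedyLE_iff_greedyFrom_map [Fintype β] (l : List β) :
    IsGreedyLE l ↔ GreedyFrom none (univ.map f.toEmbedding) (l.map f) := by
  rw [IsGreedyLE, ← greedyFrom_map_iff f]
  rfl

end OrderEmbedding

section EraseMin

variable [PartialOrder α] [DecidableEq α] {a : α}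

theorem idxOf_insertBeforeFirstAbove_lt_iff {x y : α} (hx : x ≠ a) (hy : y ≠ a)
    (l : List {z : α // z ≠ a}) :
    (insertBeforeFirstAbove a (l.map Subtype.val)).idxOf x <
        (insertBeforeFirstAbove a (l.map Subtype.val)).idxOf y ↔
      l.idxOf ⟨x, hx⟩ < l.idxOf ⟨y, hy⟩ := by
  rw [← List.idxOf_erase_lt_idxOf_erase_iff hx hy, erase_insertBeforeFirstAbove (by simp),
    ← List.idxOf_map_of_injective Subtype.val_injective,
    ← List.idxOf_map_of_injective Subtype.val_injective]

theorem insertBeforeFirstAbove_map_val_injective :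
    (fun l : List {z : α // z ≠ a} => insertBeforeFirstAbove a (l.map Subtype.val)).Injective :=
  fun l₁ l₂ h => List.map_injective_iff.2 Subtype.val_injective <| by
    simpa [erase_insertBeforeFirstAbove] using congrArg (·.erase a) h

variable [Fintype α]

theorem isGreedyLE_iff_greedyFrom_erase (l : List {z : α // z ≠ a}) :
    IsGreedyLE l ↔ GreedyFrom none (univ.erase a) (l.map Subtype.val) := by
  rw [isGreedyLE_iff_greedyFrom_map (OrderEmbedding.subtype _), OrderEmbedding.coe_subtype]
  convert Iff.rfl using 2
  rw [← filter_ne', ← univ_map_subtype]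
  rfl

theorem isGreedyLE_insertBeforeFirstAbove_iff (hmin : IsMin a)
    (hcov : ∀ b : α, a ⋖ b → ∀ u : α, u ≠ a → ¬ u < b) (l : List {z : α // z ≠ a}) :
    IsGreedyLE (insertBeforeFirstAbove a (l.map Subtype.val)) ↔ IsGreedyLE l := by
  have ha : a ∉ l.map Subtype.val := by simp
  rw [isGreedyLE_iff_greedyFrom_erase]
  constructor
  · intro hg
    have := hg.erase_isMin hmin hcov (by simp) (by simp)
    rwa [erase_insertBeforeFirstAbove ha] at this
  · intro hg
    exact hg.insert_isMin hmin hcov (by simp) (by simp)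

theorem exists_insertBeforeFirstAbove_eq (hmax : ¬ IsMax a)
    (hcov : ∀ b : α, a ⋖ b → ∀ u : α, u ≠ a → ¬ u < b) {l : List α} (hl : IsGreedyLE l) :
    ∃ l' : List {z : α // z ≠ a}, insertBeforeFirstAbove a (l'.map Subtype.val) = l := by
  have hne : ∀ z ∈ l.erase a, z ≠ a := fun z hz => (hl.nodup_s12.mem_erase_iff.1 hz).1
  lift l.erase a to List {z : α // z ≠ a} using hne with l' hl'
  exact ⟨l', hl' ▸ hl.insertBeforeFirstAbove_erase hmax hcov (by simp)⟩

end EraseMin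

theorem card_greedy_before_erase_min_general [Fintype α] [DecidableEq α] [PartialOrder α]
    (a : α) (hmin : IsMin a) (hmax : ¬ IsMax a)
    (hcov : ∀ b : α, a ⋖ b → ∀ u : α, u ≠ a → ¬ u < b)
    (x y : α) (hx : x ≠ a) (hy : y ≠ a) :
    {l : List α | IsGreedyLE l ∧ l.idxOf x < l.idxOf y}.ncard =
      {l : List {z : α // z ≠ a} |
        IsGreedyLE l ∧ l.idxOf ⟨x, hx⟩ < l.idxOf ⟨y, hy⟩}.ncard := by
  rw [← Set.ncard_image_of_injective _ insertBeforeFirstAbove_map_val_injective]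
  congr 1
  ext l
  constructor
  · rintro ⟨hl, hlt⟩
    obtain ⟨l', rfl⟩ := exists_insertBeforeFirstAbove_eq hmax hcov hl
    exact ⟨l', ⟨(isGreedyLE_insertBeforeFirstAbove_iff hmin hcov l').1 hl,
      (idxOf_insertBeforeFirstAbove_lt_iff hx hy l').1 hlt⟩, rfl⟩
  · rintro ⟨l', ⟨hl', hlt⟩, rfl⟩
    exact ⟨(isGreedyLE_insertBeforeFirstAbove_iff hmin hcov l').2 hl',
      (idxOf_insertBeforeFirstAbove_lt_iff hx hy l').2 hlt⟩

/-- Let `P` be a finite ordered set with a minimal element `a` which is not maximal and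
such that every upper cover of `a` is minimal in `P ∖ {a}`.  If `x` and `y` are two
incomparable elements of `P ∖ {a}`, then the number of greedy linear extensions of `P`
putting `x` before `y` equals the number of greedy linear extensions of `P ∖ {a}`
putting `x` before `y`. -/
theorem card_greedy_before_erase_min [Fintype α] [DecidableEq α] [PartialOrder α]
    (a : α) (hmin : IsMin a) (hmax : ¬ IsMax a)
    (hcov : ∀ b : α, a ⋖ b → ∀ u : α, u ≠ a → ¬ u < b)
    (x y : α) (hx : x ≠ a) (hy : y ≠ a) (hxy : ¬ x ≤ y) (hyx : ¬ y ≤ x) :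
    {l : List α | IsGreedyLE l ∧ l.idxOf x < l.idxOf y}.ncard =
      {l : List {z : α // z ≠ a} |
        IsGreedyLE l ∧ l.idxOf ⟨x, hx⟩ < l.idxOf ⟨y, hy⟩}.ncard :=
  card_greedy_before_erase_min_general a hmin hmax hcov x y hx hy
end

section
/- Let P be a finite ordered set with a minimal element a such that a is not maximal in P and every upper cover of a in P is a minimal element of P ∖ {a}. If L is a greedy linear extension of P, then the total order L ∖ {a} obtained from L by deleting a is a greedy linear extension of P ∖ {a}. -/
variable {α : Type*}

/-- Delete the element `a` from a list, recording in the type that the remaining entries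
are different from `a`; this realizes the operation `L ↦ L ∖ {a}`. -/
def delElt [DecidableEq α] (a : α) (l : List α) : List {z : α // z ≠ a} :=
  l.filterMap fun z => if h : z ≠ a then some ⟨z, h⟩ else none

set_option linter.unusedSectionVars false
section Aux
variable [PartialOrder α] [DecidableEq α] (a : α)

/-- The image of `s` in the subtype `{z // z ≠ a}`. -/
def subA (s : Finset α) : Finset {z : α // z ≠ a} := s.subtype (· ≠ a)

lemma mem_subA {s : Finset α} {x : {z : α // z ≠ a}} : x ∈ subA a s ↔ x.1 ∈ s := by
  simp [subA]

lemma delElt_cons_self (l : List α) : delElt a (a :: l) = delElt a l := by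
  simp [delElt]

lemma delElt_cons_ne {x : α} (h : x ≠ a) (l : List α) :
    delElt a (x :: l) = ⟨x, h⟩ :: delElt a l := by
  simp [delElt, h]

lemma delElt_nil : delElt a ([] : List α) = [] := rfl

lemma subA_erase (s : Finset α) {x : α} (h : x ≠ a) :
    subA a (s.erase x) = (subA a s).erase ⟨x, h⟩ := by
  ext y
  simp only [mem_subA, Finset.mem_erase, ne_eq, Subtype.ext_iff]

lemma subA_erase_self (s : Finset α) : subA a (s.erase a) = subA a s := by
  ext y
  simp only [mem_subA, Finset.mem_erase]
  exact and_iff_right_of_imp (fun _ => y.2)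

lemma subA_empty : subA a (∅ : Finset α) = ∅ := by
  ext y; simp [mem_subA]

lemma subA_eq_empty {s : Finset α} (ha : a ∉ s) (h : s = ∅ → False) : subA a s = ∅ → False := by
  intro he
  apply h
  ext x
  simp only [Finset.notMem_empty, iff_false]
  intro hx
  have hxa : x ≠ a := fun e => ha (e ▸ hx)
  have : (⟨x, hxa⟩ : {z : α // z ≠ a}) ∈ subA a s := mem_subA a |>.mpr hx
  simp [he] at this

lemma min_subA_iff {s : Finset α} (v : {z : α // z ≠ a}) :
    IsMinimalIn (subA a s) v ↔ v.1 ∈ s ∧ ∀ u ∈ s, u ≠ a → ¬ u < v.1 := by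
  constructor
  · rintro ⟨hv, hm⟩
    refine ⟨(mem_subA a).mp hv, fun u hu hua hlt => hm ⟨u, hua⟩ ((mem_subA a).mpr hu) ?_⟩
    exact hlt
  · rintro ⟨hv, hm⟩
    exact ⟨(mem_subA a).mpr hv, fun y hy hlt => hm y.1 ((mem_subA a).mp hy) y.2 hlt⟩

/-- Upward closedness of the set of remaining elements. -/
def UpSet (s : Finset α) : Prop := ∀ u ∈ s, ∀ z : α, u < z → z ∈ s

lemma upSet_erase {s : Finset α} (hup : UpSet s) {x : α} (hxm : IsMinimalIn s x) :
    UpSet (s.erase x) := by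
  intro u hu z hz
  rw [Finset.mem_erase] at hu ⊢
  refine ⟨fun e => hxm.2 u hu.2 (e ▸ hz), hup u hu.2 z hz⟩

/-- Key fact: if `a ∈ s`, `s` is an up-set, `v` is minimal in `s ∖ {a}` and there is no
minimal element of `s` above `q ≠ a`, then `q < v` is impossible. -/
lemma key (hcov : ∀ b : α, a ⋖ b → ∀ u : α, u ≠ a → ¬ u < b)
    {s : Finset α} (hup : UpSet s) (ha : a ∈ s)
    {q v : α} (hq : q ≠ a) (hv : v ∈ s) (hva : v ≠ a)
    (hvm : ∀ u ∈ s, u ≠ a → ¬ u < v)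
    (hno : ¬ ∃ w ∈ s, q < w ∧ IsMinimalIn s w) : ¬ q < v := by
  intro hqv
  by_cases hmins : IsMinimalIn s v
  · exact hno ⟨v, hv, hqv, hmins⟩
  · have hav : a < v := by
      simp only [IsMinimalIn, not_and, not_forall] at hmins
      obtain ⟨u, hu, hlt⟩ := by simpa using hmins hv
      rcases eq_or_ne u a with rfl | hua
      · exact hlt
      · exact absurd hlt (hvm u hu hua)
    have hcv : a ⋖ v := by
      refine ⟨hav, fun z hz hzv => ?_⟩
      exact hvm z (hup a ha z hz) (ne_of_gt hz) hzv
    exact hcov v hcv q hq hqv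

/-- After `a` has been removed, greediness transfers directly. -/
lemma tail_greedy : ∀ (l : List α) (s : Finset α), a ∉ s → ∀ (q : {z : α // z ≠ a}),
    GreedyFrom (some q.1) s l → GreedyFrom (some q) (subA a s) (delElt a l) := by
  intro l
  induction l with
  | nil =>
    intro s _ q h
    rw [delElt_nil]
    rw [show s = ∅ from h, subA_empty]
    rfl
  | cons x l ih =>
    rintro s ha q ⟨⟨hxmin, hcond⟩, hrest⟩
    have hxs : x ∈ s := hxmin.1
    have hxa : x ≠ a := fun e => ha (e ▸ hxs)
    rw [delElt_cons_ne a hxa]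
    refine ⟨⟨?_, ?_⟩, ?_⟩
    · exact (min_subA_iff a _).mpr ⟨hxs, fun u hu _ => hxmin.2 u hu⟩
    · rintro q' hq' ⟨v, hvmem, hqv, hvmin⟩
      obtain rfl : q = q' := by injection hq'
      have hvmin' : IsMinimalIn s v.1 := by
        obtain ⟨hv1, hv2⟩ := (min_subA_iff a v).mp hvmin
        refine ⟨hv1, fun u hu => hv2 u hu (fun e => ha (e ▸ hu))⟩
      have : q.1 < x := hcond q.1 rfl ⟨v.1, hvmin'.1, hqv, hvmin'⟩
      exact this
    · have := ih (s.erase x) (fun h => ha (Finset.mem_of_mem_erase h)) ⟨x, hxa⟩ hrest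
      rwa [subA_erase a s hxa] at this

/-- Merging step: greediness from state `(a, s)` with `a ∉ s` transfers to state `(p', s)`
provided there is no minimal remaining element above `p'`. -/
lemma merge_greedy (l : List α) (s : Finset α) (ha : a ∉ s) (p' : Option {z : α // z ≠ a})
    (hkey : ∀ q' : {z : α // z ≠ a}, p' = some q' →
      ¬ ∃ v : {z : α // z ≠ a}, v ∈ subA a s ∧ q'.1 < v.1 ∧ IsMinimalIn (subA a s) v)
    (h : GreedyFrom (some a) s l) : GreedyFrom p' (subA a s) (delElt a l) := by
  cases l with
  | nil =>
    rw [delElt_nil, show s = ∅ from h, subA_empty]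
    rfl
  | cons x l =>
    obtain ⟨⟨hxmin, _⟩, hrest⟩ := h
    have hxs : x ∈ s := hxmin.1
    have hxa : x ≠ a := fun e => ha (e ▸ hxs)
    rw [delElt_cons_ne a hxa]
    refine ⟨⟨?_, ?_⟩, ?_⟩
    · exact (min_subA_iff a _).mpr ⟨hxs, fun u hu _ => hxmin.2 u hu⟩
    · rintro q' hq' ⟨v, hvmem, hqv, hvmin⟩
      exact absurd ⟨v, hvmem, hqv, hvmin⟩ (hkey q' hq')
    · have := tail_greedy a l (s.erase x) (fun h => ha (Finset.mem_of_mem_erase h)) ⟨x, hxa⟩ hrest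
      rwa [subA_erase a s hxa] at this

lemma head_greedy (hmin : IsMin a)
    (hcov : ∀ b : α, a ⋖ b → ∀ u : α, u ≠ a → ¬ u < b) :
    ∀ (l : List α) (s : Finset α), UpSet s → a ∈ s →
      ∀ p' : Option {z : α // z ≠ a}, GreedyFrom (p'.map Subtype.val) s l →
      GreedyFrom p' (subA a s) (delElt a l) := by
  intro l
  induction l with
  | nil =>
    intro s _ ha p' h
    exact absurd (show a ∈ (∅ : Finset α) from h ▸ ha) (Finset.notMem_empty a)
  | cons x l ih =>
    rintro s hup ha p' ⟨⟨hxmin, hcond⟩, hrest⟩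
    by_cases hxa : x = a
    · rw [hxa] at hxmin hcond hrest ⊢
      rw [delElt_cons_self]
      rw [← subA_erase_self a s]
      refine merge_greedy a l (s.erase a) (Finset.notMem_erase a s) p' ?_ hrest
      rintro q' hq' ⟨v, hvmem, hqv, hvmin⟩
      obtain ⟨hv1, hv2⟩ := (min_subA_iff a v).mp hvmin
      have hv1' : v.1 ∈ s := Finset.mem_of_mem_erase hv1
      have hv2' : ∀ u ∈ s, u ≠ a → ¬ u < v.1 := fun u hu hua =>
        hv2 u (Finset.mem_erase.mpr ⟨hua, hu⟩) hua
      have hno : ¬ ∃ w ∈ s, q'.1 < w ∧ IsMinimalIn s w := fun hex => by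
        have hqa : q'.1 < a := hcond q'.1 (by rw [hq']; rfl) hex
        exact hqa.not_ge (hmin hqa.le)
      exact absurd hqv (key a hcov hup ha q'.2 hv1' v.2 hv2' hno)
    · rw [delElt_cons_ne a hxa]
      refine ⟨⟨?_, ?_⟩, ?_⟩
      · exact (min_subA_iff a _).mpr ⟨hxmin.1, fun u hu _ => hxmin.2 u hu⟩
      · rintro q' hq' ⟨v, hvmem, hqv, hvmin⟩
        obtain ⟨hv1, hv2⟩ := (min_subA_iff a v).mp hvmin
        by_cases hex : ∃ w ∈ s, q'.1 < w ∧ IsMinimalIn s w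
        · exact hcond q'.1 (by rw [hq']; rfl) hex
        · exact absurd hqv (key a hcov hup ha q'.2 hv1 v.2 hv2 hex)
      · have ih' := ih (s.erase x) (upSet_erase hup hxmin)
          (Finset.mem_erase.mpr ⟨fun e => hxa e.symm, ha⟩) (some ⟨x, hxa⟩) hrest
        rwa [subA_erase a s hxa] at ih'

end Aux

/-- Let `P` be a finite ordered set with a minimal element `a` which is not maximal and
such that every upper cover of `a` is minimal in `P ∖ {a}`.  If `L` is a greedy linear
extension of `P`, then `L ∖ {a}` is a greedy linear extension of `P ∖ {a}`. -/
theorem greedy_erase_min [Fintype α] [DecidableEq α] [PartialOrder α]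
    (a : α) (hmin : IsMin a) (hmax : ¬ IsMax a)
    (hcov : ∀ b : α, a ⋖ b → ∀ u : α, u ≠ a → ¬ u < b)
    (l : List α) (hl : IsGreedyLE l) : IsGreedyLE (delElt a l) := by
  have h := head_greedy a hmin hcov l Finset.univ (fun _ _ z _ => Finset.mem_univ z)
    (Finset.mem_univ a) none hl
  have : subA a (Finset.univ : Finset α) = Finset.univ := by
    ext x; simp [mem_subA]
  rwa [this] at h
end

section
/- Let P = P₁ + P₂ + ⋯ + Pₘ be the disjoint sum of finite ordered sets and let L = C₁ ⊕ C₂ ⊕ ⋯ be a greedy linear extension of P decomposed into its blocks, where each consecutive pair (sup Cᵢ, inf Cᵢ₊₁) is a jump of L. Fix j with 1 ≤ j ≤ m and let C^j₁ ⊕ C^j₂ ⊕ ⋯ be the blocks of L that are chains in Pⱼ, listed in the order in which they appear in L. Then L^j := C^j₁ ⊕ C^j₂ ⊕ ⋯ is a greedy linear extension of Pⱼ, and each pair (sup C^jᵢ, inf C^jᵢ₊₁) is a jump of L^j. -/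
variable {α : Type*}

set_option linter.unusedSectionVars false

section Aux
variable {m : ℕ} {β : Fin m → Type*} [∀ i, DecidableEq (β i)] [∀ i, PartialOrder (β i)]

def fj (j : Fin m) : (Σ i, β i) → Option (β j) :=
  fun z => if h : z.1 = j then some (h ▸ z.2) else none

lemma fj_mk (j : Fin m) (b : β j) : fj j ⟨j, b⟩ = some b := by simp [fj]

lemma fj_ne {j : Fin m} {z : Σ i, β i} (h : z.1 ≠ j) : fj j z = none := by simp [fj, h]

noncomputable def pj (j : Fin m) (s : Finset (Σ i, β i)) : Finset (β j) :=
  s.preimage (Sigma.mk j) (sigma_mk_injective.injOn)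

lemma mem_pj {j : Fin m} {s : Finset (Σ i, β i)} {b : β j} :
    b ∈ pj j s ↔ ⟨j, b⟩ ∈ s := Finset.mem_preimage

lemma pj_erase_ne {j : Fin m} {s : Finset (Σ i, β i)} {z : Σ i, β i} (h : z.1 ≠ j) :
    pj j (s.erase z) = pj j s := by
  ext b
  simp only [mem_pj, Finset.mem_erase, and_iff_right_iff_imp]
  intro _ hzb
  exact h (by rw [← hzb])

lemma pj_erase_mk {j : Fin m} {s : Finset (Σ i, β i)} (b : β j) :
    pj j (s.erase ⟨j, b⟩) = (pj j s).erase b := by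
  ext c
  simp only [mem_pj, Finset.mem_erase]
  constructor
  · rintro ⟨h1, h2⟩
    exact ⟨fun h => h1 (by rw [h]), h2⟩
  · rintro ⟨h1, h2⟩
    exact ⟨fun h => h1 (sigma_mk_injective h), h2⟩

lemma lt_mk_dest {j : Fin m} {z : Σ i, β i} {b : β j} (h : z < ⟨j, b⟩) :
    ∃ a : β j, z = ⟨j, a⟩ ∧ a < b := by
  obtain ⟨i, a⟩ := z
  rw [Sigma.lt_def] at h
  obtain ⟨h1, h2⟩ := h
  cases h1
  exact ⟨a, rfl, h2⟩

lemma mk_lt_dest {j : Fin m} {z : Σ i, β i} {b : β j} (h : (⟨j, b⟩ : Σ i, β i) < z) :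
    ∃ a : β j, z = ⟨j, a⟩ ∧ b < a := by
  obtain ⟨i, a⟩ := z
  rw [Sigma.lt_def] at h
  obtain ⟨h1, h2⟩ := h
  cases h1
  exact ⟨a, rfl, h2⟩

lemma isMinimalIn_pj {j : Fin m} {s : Finset (Σ i, β i)} {b : β j} :
    IsMinimalIn s ⟨j, b⟩ ↔ IsMinimalIn (pj j s) b := by
  constructor
  · rintro ⟨hmem, hmin⟩
    refine ⟨mem_pj.2 hmem, fun y hy hlt => ?_⟩
    exact hmin ⟨j, y⟩ (mem_pj.1 hy) (Sigma.mk_lt_mk_iff.2 hlt)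
  · rintro ⟨hmem, hmin⟩
    refine ⟨mem_pj.1 hmem, fun z hz hlt => ?_⟩
    obtain ⟨a, rfl, hab⟩ := lt_mk_dest hlt
    exact hmin a (mem_pj.2 hz) hab

end Aux

section Aux2
variable {m : ℕ} {β : Fin m → Type*} [∀ i, DecidableEq (β i)] [∀ i, PartialOrder (β i)]

lemma eq_mk_of_fst_eq {j : Fin m} {x : Σ i, β i} (h : x.1 = j) : ∃ b : β j, x = ⟨j, b⟩ := by
  obtain ⟨i, a⟩ := x
  dsimp only at h
  subst h
  exact ⟨a, rfl⟩

end Aux2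
set_option linter.unusedSectionVars false

section Main
variable {m : ℕ} {β : Fin m → Type*} [∀ i, DecidableEq (β i)] [∀ i, PartialOrder (β i)]

lemma head_filterMap_min {j : Fin m} :
    ∀ (l : List (Σ i, β i)) (p : Option (Σ i, β i)) (s : Finset (Σ i, β i)),
      GreedyFrom p s l → ∀ v : β j, (l.filterMap (fj j)).head? = some v →
      IsMinimalIn (pj j s) v
  | [], p, s, hG, v, hv => by simp at hv
  | x :: l, p, s, hG, v, hv => by
    by_cases hx : x.1 = j
    · obtain ⟨a, rfl⟩ := eq_mk_of_fst_eq hx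
      rw [List.filterMap_cons, fj_mk, List.head?_cons] at hv
      cases hv
      exact isMinimalIn_pj.1 hG.1.1
    · rw [List.filterMap_cons, fj_ne hx] at hv
      have := head_filterMap_min l (some x) (s.erase x) hG.2 v hv
      rwa [pj_erase_ne hx] at this

lemma greedy_main {j : Fin m} :
    ∀ (l : List (Σ i, β i)) (p : Option (Σ i, β i)) (s : Finset (Σ i, β i))
      (q : Option (β j)),
      GreedyFrom p s l →
      (∀ c, q = some c → p = some ⟨j, c⟩ ∨
        ¬ ∃ v ∈ pj j s, c < v ∧ IsMinimalIn (pj j s) v) →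
      GreedyFrom q (pj j s) (l.filterMap (fj j)) ∧
      ∀ (k : ℕ) (u v : β j), (l.filterMap (fj j))[k]? = some u →
        (l.filterMap (fj j))[k+1]? = some v → (u ≤ v ∨ v ≤ u) →
        ∃ n, l[n]? = some ⟨j, u⟩ ∧ l[n+1]? = some ⟨j, v⟩
  | [], p, s, q, hG, hInv => by
    have hs : s = ∅ := hG
    constructor
    · show pj j s = ∅
      simp [hs, pj]
    · intro k u v hu _ _
      simp at hu
  | x :: l, p, s, q, hG, hInv => by
    by_cases hx : x.1 = j
    · obtain ⟨a, rfl⟩ := eq_mk_of_fst_eq hx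
      rw [List.filterMap_cons, fj_mk]
      -- greedy next step for the restricted list
      have hnext : GreedyNext q (pj j s) a := by
        refine ⟨isMinimalIn_pj.1 hG.1.1, ?_⟩
        rintro c hc ⟨v, hv, hcv, hminv⟩
        rcases hInv c hc with hp | hno
        · have := hG.1.2 ⟨j, c⟩ hp
            ⟨⟨j, v⟩, mem_pj.1 hv, Sigma.mk_lt_mk_iff.2 hcv, isMinimalIn_pj.2 hminv⟩
          exact Sigma.mk_lt_mk_iff.1 this
        · exact absurd ⟨v, hv, hcv, hminv⟩ hno
      have IH := greedy_main l (some ⟨j, a⟩) (s.erase ⟨j, a⟩) (some a) hG.2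
        (by rintro c hc; cases hc; exact Or.inl rfl)
      rw [pj_erase_mk] at IH
      refine ⟨⟨hnext, IH.1⟩, ?_⟩
      intro k u v hu hv hcomp
      match k with
      | 0 =>
        rw [List.getElem?_cons_zero] at hu
        obtain rfl : a = u := Option.some.inj hu
        rw [List.getElem?_cons_succ] at hv
        -- v is the head of the restricted tail
        have hvhead : (l.filterMap (fj j)).head? = some v := by
          rwa [List.head?_eq_getElem?]
        have hminv : IsMinimalIn (pj j (s.erase ⟨j, a⟩)) v :=
          head_filterMap_min l (some ⟨j, a⟩) (s.erase ⟨j, a⟩) hG.2 v hvhead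
        have hvmem' : v ∈ (pj j s).erase a := by have h := hminv.1; rwa [pj_erase_mk] at h
        have hvne : v ≠ a := (Finset.mem_erase.1 hvmem').1
        have hvs : ⟨j, v⟩ ∈ s := mem_pj.1 (Finset.mem_erase.1 hvmem').2
        have hnotlt : ¬ v < a := fun h => hG.1.1.2 ⟨j, v⟩ hvs (Sigma.mk_lt_mk_iff.2 h)
        have huv : a < v := by
          rcases hcomp with h | h
          · exact h.lt_of_ne (fun e => hvne e.symm)
          · exact absurd (h.lt_of_ne hvne) hnotlt
        -- the head of l must be ⟨j, v⟩
        match l, hvhead, hminv with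
        | y :: t, hvhead, hminv =>
          have hylt : (⟨j, a⟩ : Σ i, β i) < y := hG.2.1.2 ⟨j, a⟩ rfl
            ⟨⟨j, v⟩, mem_pj.1 hminv.1, Sigma.mk_lt_mk_iff.2 huv, isMinimalIn_pj.2 hminv⟩
          obtain ⟨w, rfl, _⟩ := mk_lt_dest hylt
          rw [List.filterMap_cons, fj_mk, List.head?_cons] at hvhead
          cases hvhead
          exact ⟨0, rfl, by simp⟩
      | k + 1 =>
        rw [List.getElem?_cons_succ] at hu hv
        obtain ⟨n, hn1, hn2⟩ := IH.2 k u v hu hv hcomp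
        exact ⟨n + 1, by rwa [List.getElem?_cons_succ], by rwa [List.getElem?_cons_succ]⟩
    · rw [List.filterMap_cons, fj_ne hx]
      have hInv' : ∀ c, q = some c → some x = some ⟨j, c⟩ ∨
          ¬ ∃ v ∈ pj j (s.erase x), c < v ∧ IsMinimalIn (pj j (s.erase x)) v := by
        intro c hc
        rw [pj_erase_ne hx]
        refine Or.inr ?_
        rintro ⟨v, hv, hcv, hminv⟩
        rcases hInv c hc with hp | hno
        · have := hG.1.2 ⟨j, c⟩ hp
            ⟨⟨j, v⟩, mem_pj.1 hv, Sigma.mk_lt_mk_iff.2 hcv, isMinimalIn_pj.2 hminv⟩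
          obtain ⟨w, hw, _⟩ := mk_lt_dest this
          exact hx (by rw [hw])
        · exact hno ⟨v, hv, hcv, hminv⟩
      have IH := greedy_main l (some x) (s.erase x) q hG.2 hInv'
      rw [pj_erase_ne hx] at IH
      refine ⟨IH.1, ?_⟩
      intro k u v hu hv hcomp
      obtain ⟨n, hn1, hn2⟩ := IH.2 k u v hu hv hcomp
      exact ⟨n + 1, by rwa [List.getElem?_cons_succ], by rwa [List.getElem?_cons_succ]⟩

end Main
/-- Let `P = P₁ + ⋯ + Pₘ` be a disjoint sum of finite ordered sets (modelled as the
sigma type with the componentwise order) and `L` a greedy linear extension of `P`.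
For a fixed component `j`, let `L^j` be the concatenation, in the order in which they
appear in `L`, of the blocks of `L` lying in `Pⱼ`; equivalently, `L^j` is the subsequence
of `L` consisting of the elements of `Pⱼ`.  Then `L^j` is a greedy linear extension of
`Pⱼ` and each pair `(sup C^jᵢ, inf C^jᵢ₊₁)` of endpoints of successive blocks is a jump
of `L^j`: every pair of elements consecutive in `L^j` which are comparable in `Pⱼ` must
lie in a common block of `L` (i.e. be consecutive in `L`), all remaining consecutive
pairs of `L^j` being incomparable. -/
theorem greedy_restrict_component {m : ℕ} (β : Fin m → Type*) [∀ i, Fintype (β i)]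
    [∀ i, DecidableEq (β i)] [∀ i, PartialOrder (β i)]
    (L : List (Σ i, β i)) (hL : IsGreedyLE L) (j : Fin m) :
    IsGreedyLE (L.filterMap fun z => if h : z.1 = j then some (h ▸ z.2) else none) ∧
      ∀ (k : ℕ) (u v : β j),
        (L.filterMap fun z => if h : z.1 = j then some (h ▸ z.2) else none)[k]? = some u →
        (L.filterMap fun z => if h : z.1 = j then some (h ▸ z.2) else none)[k + 1]? = some v →
        (u ≤ v ∨ v ≤ u) →
        ∃ n : ℕ, L[n]? = some ⟨j, u⟩ ∧ L[n + 1]? = some ⟨j, v⟩ := by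
  have hpu : pj j (Finset.univ : Finset (Σ i, β i)) = Finset.univ := by
    ext b; simp [mem_pj]
  have main := greedy_main (j := j) L none Finset.univ none hL (fun c h => by cases h)
  rw [hpu] at main
  exact main
end
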